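/- arXiv:2408.11651 — 2 statements merged into one kernel-verified Lean document; each statement's English description precedes it below -/
import Mathlib

section
/- A Boolean function f : Bool^k → Bool is affine if and only if for every argument index i ∈ [k], one of the following holds: (a) flipping the i-th argument never changes the value of f, or (b) flipping the i-th argument always changes the value of f (for all fixings of the other arguments). -/
/-- Identify `Bool` with `{0,1} ⊆ ZMod 2`. -/
def b2z (b : Bool) : ZMod 2 := if b then 1 else 0

/-- `f : Bool^k → Bool` is affine if it is given by an affine polynomial over `ZMod 2`. -/
def IsAffine {k : ℕ} (f : (Fin k → Bool) → Bool) : Prop :=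
  ∃ (c₀ : ZMod 2) (c : Fin k → ZMod 2),
    ∀ v : Fin k → Bool, b2z (f v) = c₀ + ∑ i : Fin k, c i * b2z (v i)

lemma b2z_inj : Function.Injective b2z := by decide

lemma b2z_ne (a b : Bool) (h : a ≠ b) : b2z a = b2z b + 1 := by
  revert h; revert a b; decide

lemma sum_update {k : ℕ} (c : Fin k → ZMod 2) (v : Fin k → Bool) (i : Fin k) (b : Bool) :
    ∑ j : Fin k, c j * b2z (Function.update v i b j)
      = c i * b2z b + ∑ j ∈ Finset.univ.erase i, c j * b2z (v j) := by
  rw [← Finset.add_sum_erase _ _ (Finset.mem_univ i), Function.update_self]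
  congr 1
  refine Finset.sum_congr rfl fun j hj => ?_
  rw [Function.update_of_ne (Finset.ne_of_mem_erase hj)]

theorem affine_iff_flip_dichotomy {k : ℕ} (f : (Fin k → Bool) → Bool) :
    IsAffine f ↔
      ∀ i : Fin k,
        (∀ v : Fin k → Bool,
            f (Function.update v i false) = f (Function.update v i true)) ∨
        (∀ v : Fin k → Bool,
            f (Function.update v i false) ≠ f (Function.update v i true)) := by
  have z01 : ∀ x : ZMod 2, x = 0 ∨ x = 1 := by decide
  constructor
  · rintro ⟨c₀, c, hc⟩ i
    have key : ∀ v : Fin k → Bool,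
        b2z (f (Function.update v i true)) = b2z (f (Function.update v i false)) + c i := by
      intro v
      rw [hc, hc, sum_update, sum_update]
      simp [b2z]
      ring
    rcases z01 (c i) with h | h
    · left
      intro v
      apply b2z_inj
      have := key v
      rw [h, add_zero] at this
      exact this.symm
    · right
      intro v heq
      have := key v
      rw [h, heq] at this
      have h10 : (1 : ZMod 2) = 0 := left_eq_add.mp this
      exact absurd h10 (by decide)
  · intro H
    classical
    set c : Fin k → ZMod 2 := fun i =>
      if ∀ v : Fin k → Bool,
          f (Function.update v i false) ≠ f (Function.update v i true) then 1 else 0 with hcdef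
    refine ⟨b2z (f (fun _ => false)), c, ?_⟩
    have step : ∀ (i : Fin k) (v : Fin k → Bool),
        b2z (f (Function.update v i true)) = b2z (f (Function.update v i false)) + c i := by
      intro i v
      rcases H i with h | h
      · have hci : c i = 0 := by
          rw [hcdef]
          simp only [ite_eq_right_iff]
          intro hne
          exact absurd (h v) (hne v)
        rw [hci, add_zero, h v]
      · have hci : c i = 1 := by rw [hcdef]; simp only [if_pos h]
        rw [hci]
        exact b2z_ne _ _ (Ne.symm (h v))
    have key : ∀ (n : ℕ) (v : Fin k → Bool),
        (Finset.univ.filter (fun j => v j = true)).card = n →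
        b2z (f v) = b2z (f (fun _ => false)) + ∑ i : Fin k, c i * b2z (v i) := by
      intro n
      induction n with
      | zero =>
        intro v hv
        have hv' : v = fun _ => false := by
          funext j
          by_contra hj
          have hj' : v j = true := by simpa using hj
          have : j ∈ Finset.univ.filter (fun j => v j = true) := by simp [hj']
          rw [Finset.card_eq_zero] at hv
          simp [hv] at this
        subst hv'
        simp [b2z]
      | succ n ih =>
        intro v hv
        have hne : (Finset.univ.filter (fun j => v j = true)).Nonempty := by
          rw [← Finset.card_pos, hv]; omega
        obtain ⟨i, hi⟩ := hne
        have hvi : v i = true := by simpa using hi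
        set w := Function.update v i false with hw
        have hfilter : Finset.univ.filter (fun j => w j = true)
            = (Finset.univ.filter (fun j => v j = true)).erase i := by
          ext j
          by_cases hji : j = i
          · subst hji
            simp [hw, Function.update_self]
          · simp [hw, Function.update_of_ne hji, hji]
        have hcard : (Finset.univ.filter (fun j => w j = true)).card = n := by
          rw [hfilter, Finset.card_erase_of_mem hi, hv]; omega
        have hvw : v = Function.update w i true := by
          funext j
          by_cases hji : j = i
          · subst hji; simp [hw, Function.update_self, hvi]
          · simp [hw, Function.update_of_ne hji]
        have hw' : w = Function.update w i false := by
          funext j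
          by_cases hji : j = i
          · subst hji; simp [hw, Function.update_self]
          · simp [Function.update_of_ne hji]
        have h1 : b2z (f v) = b2z (f w) + c i := by
          conv_lhs => rw [hvw]
          conv_rhs => rw [hw']
          exact step i w
        rw [h1, ih w hcard]
        have hsum : ∑ j : Fin k, c j * b2z (v j) = (∑ j : Fin k, c j * b2z (w j)) + c i := by
          rw [hvw]
          rw [sum_update]
          conv_rhs => rw [hw', sum_update]
          simp [b2z]
          ring
        rw [hsum]
        ring
    intro v
    exact key _ v rfl
end

section
/- Monotonicity transfer through Boolean combinations (Lemma on E and O sets): Let S, T be pointed Kripke structures and ψ a De Morgan modal formula. Define E_ψ and O_ψ as the sets of formulas λ such that ◇λ occurs in ψ under an even (resp. odd) number of negations. If (i) S and T agree on all atomic formulas at their initial worlds, (ii) for every λ ∈ E_ψ, S ⊨ ◇λ implies T ⊨ ◇λ, and (iii) for every λ ∈ O_ψ, T ⊨ ◇λ implies S ⊨ ◇λ, then S ⊨ ψ implies T ⊨ ψ. -/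
/-- Modal formulas over the De Morgan basis `{¬, ∧, ∨, ⊤, ⊥}` with `◇`. -/
inductive MF where
  | var : ℕ → MF
  | top : MF
  | bot : MF
  | neg : MF → MF
  | and : MF → MF → MF
  | or  : MF → MF → MF
  | dia : MF → MF

namespace MF

/-- Kripke semantics. -/
def sat {W : Type} (R : W → W → Prop) (V : ℕ → W → Prop) : W → MF → Prop
  | w, var n => V n w
  | _, top => True
  | _, bot => False
  | w, neg φ => ¬ sat R V w φ
  | w, and φ ψ => sat R V w φ ∧ sat R V w ψ
  | w, or φ ψ => sat R V w φ ∨ sat R V w ψ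
  | w, dia φ => ∃ w', R w w' ∧ sat R V w' φ

/-- `(EO ψ).1 = E_ψ` collects the `λ` with `◇λ` occurring under an even number
of negations; `(EO ψ).2 = O_ψ` those occurring under an odd number. -/
def EO : MF → Set MF × Set MF
  | var _ => (∅, ∅)
  | top => (∅, ∅)
  | bot => (∅, ∅)
  | dia φ => ({φ}, ∅)
  | neg φ => ((EO φ).2, (EO φ).1)
  | and φ ψ => ((EO φ).1 ∪ (EO ψ).1, (EO φ).2 ∪ (EO ψ).2)
  | or φ ψ => ((EO φ).1 ∪ (EO ψ).1, (EO φ).2 ∪ (EO ψ).2)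

end MF

theorem E_O_aux (ψ : MF) :
    ∀ {W₁ W₂ : Type} (R₁ : W₁ → W₁ → Prop) (V₁ : ℕ → W₁ → Prop) (ι₁ : W₁)
      (R₂ : W₂ → W₂ → Prop) (V₂ : ℕ → W₂ → Prop) (ι₂ : W₂),
    (∀ n, V₁ n ι₁ ↔ V₂ n ι₂) →
    (∀ lam ∈ (MF.EO ψ).1,
      MF.sat R₁ V₁ ι₁ (.dia lam) → MF.sat R₂ V₂ ι₂ (.dia lam)) →
    (∀ lam ∈ (MF.EO ψ).2,
      MF.sat R₂ V₂ ι₂ (.dia lam) → MF.sat R₁ V₁ ι₁ (.dia lam)) →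
    MF.sat R₁ V₁ ι₁ ψ → MF.sat R₂ V₂ ι₂ ψ := by
  induction ψ with
  | var n =>
    intro _ _ R₁ V₁ ι₁ R₂ V₂ ι₂ hatom _ _ h
    exact (hatom n).mp h
  | top => intro _ _ _ _ _ _ _ _ _ _ _ h; exact h
  | bot => intro _ _ _ _ _ _ _ _ _ _ _ h; exact h
  | neg φ ih =>
    intro _ _ R₁ V₁ ι₁ R₂ V₂ ι₂ hatom hE hO h hc
    exact h (ih R₂ V₂ ι₂ R₁ V₁ ι₁ (fun n => (hatom n).symm)
      (fun lam hl => hO lam hl) (fun lam hl => hE lam hl) hc)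
  | and φ₁ φ₂ ih₁ ih₂ =>
    intro _ _ R₁ V₁ ι₁ R₂ V₂ ι₂ hatom hE hO h
    exact ⟨ih₁ R₁ V₁ ι₁ R₂ V₂ ι₂ hatom (fun l hl => hE l (Or.inl hl))
        (fun l hl => hO l (Or.inl hl)) h.1,
      ih₂ R₁ V₁ ι₁ R₂ V₂ ι₂ hatom (fun l hl => hE l (Or.inr hl))
        (fun l hl => hO l (Or.inr hl)) h.2⟩
  | or φ₁ φ₂ ih₁ ih₂ =>
    intro _ _ R₁ V₁ ι₁ R₂ V₂ ι₂ hatom hE hO h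
    cases h with
    | inl h => exact Or.inl (ih₁ R₁ V₁ ι₁ R₂ V₂ ι₂ hatom (fun l hl => hE l (Or.inl hl))
        (fun l hl => hO l (Or.inl hl)) h)
    | inr h => exact Or.inr (ih₂ R₁ V₁ ι₁ R₂ V₂ ι₂ hatom (fun l hl => hE l (Or.inr hl))
        (fun l hl => hO l (Or.inr hl)) h)
  | dia φ _ =>
    intro _ _ R₁ V₁ ι₁ R₂ V₂ ι₂ _ hE _ h
    exact hE φ rfl h

theorem E_O_transfer
    {W₁ W₂ : Type} (R₁ : W₁ → W₁ → Prop) (V₁ : ℕ → W₁ → Prop) (ι₁ : W₁)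
    (R₂ : W₂ → W₂ → Prop) (V₂ : ℕ → W₂ → Prop) (ι₂ : W₂) (ψ : MF)
    (hatom : ∀ n, V₁ n ι₁ ↔ V₂ n ι₂)
    (hE : ∀ lam ∈ (MF.EO ψ).1,
      MF.sat R₁ V₁ ι₁ (.dia lam) → MF.sat R₂ V₂ ι₂ (.dia lam))
    (hO : ∀ lam ∈ (MF.EO ψ).2,
      MF.sat R₂ V₂ ι₂ (.dia lam) → MF.sat R₁ V₁ ι₁ (.dia lam)) :
    MF.sat R₁ V₁ ι₁ ψ → MF.sat R₂ V₂ ι₂ ψ := by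
  exact E_O_aux ψ R₁ V₁ ι₁ R₂ V₂ ι₂ hatom hE hO
end
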